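/- A ring R is central reduced if and only if R/P(R) is central reduced and P(R) is contained in the center of R, where P(R) is the prime radical. -/

import Mathlib

/-- A ring is central reduced if every nilpotent element is central. -/
def IsCentralReduced (R : Type*) [Ring R] : Prop :=
  ∀ a : R, IsNilpotent a → a ∈ Set.center R

/-- A two-sided ideal `P` of a ring is prime if whenever `a R b ⊆ P`, then
`a ∈ P` or `b ∈ P`. -/
def TwoSidedIdeal.IsPrimeIdeal {R : Type*} [Ring R] (P : TwoSidedIdeal R) : Prop :=
  (P : Set R) ≠ Set.univ ∧ ∀ a b : R, (∀ r : R, a * r * b ∈ P) → a ∈ P ∨ b ∈ P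

/-- The prime radical of a ring, as a two-sided ideal: the infimum of all prime
two-sided ideals. -/
def primeRadical (R : Type*) [Ring R] : TwoSidedIdeal R :=
  sInf {P : TwoSidedIdeal R | P.IsPrimeIdeal}

/-!
Elements of the prime radical are nilpotent: if `x` is not nilpotent, an ideal maximal among
those missing the powers of `x` is prime (Zorn), and it does not contain `x`. Conversely, if `a`
is central modulo a prime ideal `Q` and `a ^ (n + 1) ∈ Q`, then `a ^ n * R * a ⊆ Q`, so `a ∈ Q`
by descent on `n`. Hence `a` is nilpotent iff its image in `R ⧸ P(R)` is, and a nilpotent element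
that is central modulo `P(R)` lies in `P(R)`; both implications follow from these two facts.
-/

namespace TwoSidedIdeal

variable {R : Type*} [Ring R]

lemma mem_sSup_of_directedOn {c : Set (TwoSidedIdeal R)} (hne : c.Nonempty)
    (hc : DirectedOn (· ≤ ·) c) {x : R} : x ∈ sSup c ↔ ∃ I ∈ c, x ∈ I := by
  refine ⟨fun hx ↦ ?_, fun ⟨I, hI, hx⟩ ↦ le_sSup hI hx⟩
  let U : TwoSidedIdeal R := mk' {x | ∃ I ∈ c, x ∈ I}
    (hne.elim fun I hI ↦ ⟨I, hI, I.zero_mem⟩)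
    (fun ⟨I, hI, hu⟩ ⟨J, hJ, hv⟩ ↦
      let ⟨K, hK, hIK, hJK⟩ := hc I hI J hJ
      ⟨K, hK, K.add_mem (hIK hu) (hJK hv)⟩)
    (fun ⟨I, hI, hu⟩ ↦ ⟨I, hI, I.neg_mem hu⟩)
    (fun ⟨I, hI, hu⟩ ↦ ⟨I, hI, I.mul_mem_left _ _ hu⟩)
    (fun ⟨I, hI, hu⟩ ↦ ⟨I, hI, I.mul_mem_right _ _ hu⟩)
  have hle : sSup c ≤ U := sSup_le fun I hI u hu ↦ (mem_mk' ..).2 ⟨I, hI, hu⟩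
  exact (mem_mk' _ _ _ _ _ _ x).1 (hle hx)

lemma sup_span_singleton_le_iff {P K : TwoSidedIdeal R} {a : R} :
    P ⊔ span {a} ≤ K ↔ P ≤ K ∧ a ∈ K := by
  rw [sup_le_iff, span_le, Set.singleton_subset_iff, SetLike.mem_coe]

def rightColon (P : TwoSidedIdeal R) (s : R) : TwoSidedIdeal R :=
  mk' {t | ∀ r, s * r * t ∈ P}
    (fun r ↦ by simp)
    (fun hx hy r ↦ by simpa [mul_add] using P.add_mem (hx r) (hy r))
    (fun hx r ↦ by simpa [mul_neg] using P.neg_mem (hx r))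
    (fun {x _} hy r ↦ by simpa [mul_assoc] using hy (r * x))
    (fun {_ y} hx r ↦ by simpa [mul_assoc] using P.mul_mem_right _ y (hx r))

def leftColon (P : TwoSidedIdeal R) (t : R) : TwoSidedIdeal R :=
  mk' {s | ∀ r, s * r * t ∈ P}
    (fun r ↦ by simp)
    (fun hx hy r ↦ by simpa [add_mul] using P.add_mem (hx r) (hy r))
    (fun hx r ↦ by simpa [neg_mul] using P.neg_mem (hx r))
    (fun {x _} hy r ↦ by simpa [mul_assoc] using P.mul_mem_left x _ (hy r))
    (fun {_ y} hx r ↦ by simpa [mul_assoc] using hx (y * r))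

lemma mem_rightColon {P : TwoSidedIdeal R} {s t : R} :
    t ∈ P.rightColon s ↔ ∀ r, s * r * t ∈ P :=
  mem_mk' ..

lemma mem_leftColon {P : TwoSidedIdeal R} {s t : R} :
    s ∈ P.leftColon t ↔ ∀ r, s * r * t ∈ P :=
  mem_mk' ..

lemma le_rightColon (P : TwoSidedIdeal R) (s : R) : P ≤ P.rightColon s :=
  fun _ ht ↦ mem_rightColon.2 fun _ ↦ P.mul_mem_left _ _ ht

lemma le_leftColon (P : TwoSidedIdeal R) (t : R) : P ≤ P.leftColon t :=
  fun _ hs ↦ mem_leftColon.2 fun _ ↦ P.mul_mem_right _ _ (P.mul_mem_right _ _ hs)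

lemma mul_mul_mem_of_mem_sup_span {P : TwoSidedIdeal R} {a b : R} (hab : ∀ r, a * r * b ∈ P)
    {s t : R} (hs : s ∈ P ⊔ span {a}) (ht : t ∈ P ⊔ span {b}) (r : R) : s * r * t ∈ P := by
  have hat : t ∈ P.rightColon a :=
    sup_span_singleton_le_iff.2 ⟨P.le_rightColon a, mem_rightColon.2 hab⟩ ht
  have hst : s ∈ P.leftColon t :=
    sup_span_singleton_le_iff.2 ⟨P.le_leftColon t, mem_leftColon.2 (mem_rightColon.1 hat)⟩ hs
  exact mem_leftColon.1 hst r

lemma isPrimeIdeal_of_maximal_disjoint (S : Submonoid R) {P : TwoSidedIdeal R}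
    (hP : Maximal (fun I : TwoSidedIdeal R ↦ Disjoint (I : Set R) S) P) : P.IsPrimeIdeal := by
  refine ⟨fun h ↦ Set.disjoint_left.1 hP.1 (h ▸ Set.mem_univ 1) S.one_mem, fun a b hab ↦ ?_⟩
  by_contra! hne
  have meets (c : R) (hc : c ∉ P) : ∃ s ∈ S, s ∈ P ⊔ span {c} := by
    by_contra! hdisj
    refine hc (hP.2 (Set.disjoint_right.2 fun _ hs ↦ hdisj _ hs) le_sup_left ?_)
    exact mem_sup_right (subset_span rfl)
  obtain ⟨s, hsS, hs⟩ := meets a hne.1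
  obtain ⟨t, htS, ht⟩ := meets b hne.2
  exact Set.disjoint_left.1 hP.1
    (by simpa using mul_mul_mem_of_mem_sup_span hab hs ht 1) (S.mul_mem hsS htS)

lemma exists_maximal_disjoint (S : Submonoid R) (h0 : (0 : R) ∉ S) :
    ∃ P : TwoSidedIdeal R, Maximal (fun I : TwoSidedIdeal R ↦ Disjoint (I : Set R) S) P := by
  have hbot : Disjoint ((⊥ : TwoSidedIdeal R) : Set R) S := by
    rwa [coe_bot, Set.disjoint_singleton_left]
  obtain ⟨P, -, hP⟩ := zorn_le_nonempty₀ {I : TwoSidedIdeal R | Disjoint (I : Set R) S}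
    (fun c hcS hc J hJ ↦ ⟨sSup c, Set.disjoint_left.2 fun _ hu ↦ by
      obtain ⟨I, hI, hu⟩ := (mem_sSup_of_directedOn ⟨J, hJ⟩ hc.directedOn).1 hu
      exact Set.disjoint_left.1 (hcS hI) hu, fun _ hI ↦ le_sSup hI⟩) ⊥ hbot
  exact ⟨P, hP⟩

lemma exists_isPrimeIdeal_notMem_of_not_isNilpotent {x : R} (hx : ¬IsNilpotent x) :
    ∃ P : TwoSidedIdeal R, P.IsPrimeIdeal ∧ x ∉ P := by
  obtain ⟨P, hP⟩ := exists_maximal_disjoint (Submonoid.powers x) fun ⟨n, hn⟩ ↦ hx ⟨n, hn⟩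
  exact ⟨P, isPrimeIdeal_of_maximal_disjoint _ hP,
    fun hxP ↦ Set.disjoint_left.1 hP.1 hxP (Submonoid.mem_powers x)⟩

lemma IsPrimeIdeal.mem_of_pow_mem {Q : TwoSidedIdeal R} (hQ : Q.IsPrimeIdeal) {a : R}
    (hcomm : ∀ r, a * r - r * a ∈ Q) {n : ℕ} (hn : a ^ n ∈ Q) : a ∈ Q := by
  induction n with
  | zero => simpa using Q.mul_mem_left a _ hn
  | succ n ih =>
    have h : ∀ r, a ^ n * r * a ∈ Q := fun r ↦ by
      have : a ^ n * r * a = a ^ (n + 1) * r - a ^ n * (a * r - r * a) := by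
        rw [pow_succ]; noncomm_ring
      rw [this]
      exact Q.sub_mem (Q.mul_mem_right _ _ hn) (Q.mul_mem_left _ _ (hcomm r))
    exact (hQ.2 _ _ h).elim ih id

lemma mk'_mem_center_iff {I : TwoSidedIdeal R} {a : R} :
    I.ringCon.mk' a ∈ Set.center I.ringCon.Quotient ↔ ∀ r, a * r - r * a ∈ I := by
  simp only [Semigroup.mem_center_iff, ← ker_ringCon_mk' I, mem_ker, map_sub, map_mul,
    sub_eq_zero, eq_comm (a := I.ringCon.mk' a * _)]
  exact I.ringCon.mk'_surjective.forall

end TwoSidedIdeal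

open TwoSidedIdeal

section primeRadical

variable {R : Type*} [Ring R]

lemma isNilpotent_of_mem_primeRadical {x : R} (hx : x ∈ primeRadical R) : IsNilpotent x := by
  by_contra h
  obtain ⟨P, hP, hxP⟩ := exists_isPrimeIdeal_notMem_of_not_isNilpotent h
  exact hxP ((mem_sInf _).1 hx P hP)

lemma mem_primeRadical_of_isNilpotent {a : R} (ha : IsNilpotent a)
    (hcomm : ∀ r, a * r - r * a ∈ primeRadical R) : a ∈ primeRadical R := by
  obtain ⟨n, hn⟩ := ha
  exact (mem_sInf _).2 fun Q hQ ↦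
    IsPrimeIdeal.mem_of_pow_mem hQ (fun r ↦ (mem_sInf _).1 (hcomm r) Q hQ) (hn ▸ Q.zero_mem)

lemma isNilpotent_mk'_primeRadical_iff {a : R} :
    IsNilpotent ((primeRadical R).ringCon.mk' a) ↔ IsNilpotent a := by
  refine ⟨fun ⟨n, hn⟩ ↦ .of_pow (m := n) (isNilpotent_of_mem_primeRadical ?_), fun ha ↦ ha.map _⟩
  rwa [← ker_ringCon_mk' (primeRadical R), mem_ker, map_pow]

end primeRadical

theorem stmt_9 (R : Type*) [Ring R] :
    IsCentralReduced R ↔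
      (IsCentralReduced (primeRadical R).ringCon.Quotient ∧
        (primeRadical R : Set R) ⊆ Set.center R) := by
  refine ⟨fun h ↦ ⟨fun y hy ↦ ?_, fun a ha ↦ h a (isNilpotent_of_mem_primeRadical ha)⟩,
    fun ⟨hq, hsub⟩ a ha ↦ hsub ?_⟩
  · obtain ⟨a, rfl⟩ := (primeRadical R).ringCon.mk'_surjective y
    have hac := Semigroup.mem_center_iff.1 (h a (isNilpotent_mk'_primeRadical_iff.1 hy))
    exact mk'_mem_center_iff.2 fun r ↦ by simp [hac r]
  · exact mem_primeRadical_of_isNilpotent ha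
      (mk'_mem_center_iff.1 (hq _ (isNilpotent_mk'_primeRadical_iff.2 ha)))
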